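/- The regular spanners are closed under set difference: for all regular spanners P1 and P2, the spanner P1 − P2 defined by (P1 − P2)(d) = P1(d) \ P2(d) for every document d is a regular spanner. -/

import Mathlib

namespace DocSpanners

/-- A span: a pair of endpoint positions `[i, j⟩`. -/
abbrev Span : Type := ℕ × ℕ

/-- `s` is a span of document `d`. -/
def IsSpanOf {α : Type} (d : List α) (s : Span) : Prop :=
  s.1 ≤ s.2 ∧ s.2 ≤ d.length

/-- A (schemaless) mapping over variable type `V`: a partial assignment of spans. -/
abbrev Mapping (V : Type) : Type := V → Option Span

/-- `m` is a mapping of document `d`. -/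
def MappingOf {α V : Type} (d : List α) (m : Mapping V) : Prop :=
  ∀ x s, m x = some s → IsSpanOf d s

/-- A spanner: maps documents to sets of mappings. -/
abbrev Spanner (α V : Type) : Type := List α → Set (Mapping V)

/-- Labels of a variable-set automaton: letters and variable markers. -/
inductive Label (α V : Type) : Type where
  | letter (a : α)
  | vopen (x : V)
  | vclose (x : V)
deriving DecidableEq

/-- The sequence of letters of a ref-word. -/
def letters {α V : Type} (w : List (Label α V)) : List α :=
  w.filterMap fun l => match l with
    | Label.letter a => some a
    | _ => none

/-- A ref-word is valid if for each variable, either its markers do not appear, or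
the opening and closing markers appear exactly once with the opening first. -/
def ValidRef {α V : Type} [DecidableEq α] [DecidableEq V] (w : List (Label α V)) : Prop :=
  ∀ x : V,
    (Label.vopen x ∉ w ∧ Label.vclose x ∉ w) ∨
    (w.count (Label.vopen x) = 1 ∧ w.count (Label.vclose x) = 1 ∧
      w.idxOf (Label.vopen x) < w.idxOf (Label.vclose x))

/-- The mapping defined by a (valid) ref-word: each marked variable is sent to the
span delimited by the positions at which its markers are read. -/
def refMapping {α V : Type} [DecidableEq α] [DecidableEq V] (w : List (Label α V)) :
    Mapping V := fun x =>
  if Label.vopen x ∈ w then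
    some ((letters (w.take (w.idxOf (Label.vopen x)))).length,
          (letters (w.take (w.idxOf (Label.vclose x)))).length)
  else none

/-- A variable-set automaton with state type `Q`. -/
structure VA (α V Q : Type) : Type where
  init : Q
  final : Set Q
  trans : Q → Label α V → Q → Prop

/-- Paths in a VA. -/
inductive VA.Path {α V Q : Type} (A : VA α V Q) : Q → List (Label α V) → Q → Prop where
  | nil (q : Q) : VA.Path A q [] q
  | cons {q q' q'' : Q} {l : Label α V} {w : List (Label α V)} :
      A.trans q l q' → VA.Path A q' w q'' → VA.Path A q (l :: w) q''

/-- The VA accepts the ref-word `w` (an accepting run reads `w`). -/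
def VA.AcceptsRef {α V Q : Type} (A : VA α V Q) (w : List (Label α V)) : Prop :=
  ∃ qf ∈ A.final, A.Path A.init w qf

/-- A VA is sequential if every accepting run is valid. -/
def VA.Sequential {α V Q : Type} [DecidableEq α] [DecidableEq V] (A : VA α V Q) : Prop :=
  ∀ w, A.AcceptsRef w → ValidRef w

/-- The spanner defined by a (sequential) VA. -/
def VA.spanner {α V Q : Type} [DecidableEq α] [DecidableEq V] (A : VA α V Q) :
    Spanner α V := fun d =>
  {m | ∃ w, A.AcceptsRef w ∧ letters w = d ∧ refMapping w = m}

/-- A spanner is regular if it is defined by some sequential VA with finitely many states. -/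
def IsRegular {α V : Type} [DecidableEq α] [DecidableEq V] (P : Spanner α V) : Prop :=
  ∃ (Q : Type) (_ : Fintype Q) (A : VA α V Q), A.Sequential ∧ A.spanner = P

/-- The skyline operator: keep only the mappings of `P d` that are maximal under `R d`. -/
def skyline {α V : Type} (P : Spanner α V)
    (R : List α → Mapping V → Mapping V → Prop) : Spanner α V := fun d =>
  {m | m ∈ P d ∧ ∀ m' ∈ P d, m' ≠ m → ¬ R d m m'}

/-- The variable inclusion domination relation: `m2` extends `m1`. -/
def varIncRel {V : Type} (m1 m2 : Mapping V) : Prop :=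
  ∀ x s, m1 x = some s → m2 x = some s

/-- Two mappings have the same domain. -/
def sameDom {V : Type} (m1 m2 : Mapping V) : Prop :=
  ∀ x, m1 x = none ↔ m2 x = none

/-- The span inclusion domination relation. -/
def spanIncRel {V : Type} (m1 m2 : Mapping V) : Prop :=
  sameDom m1 m2 ∧
    ∀ x s1 s2, m1 x = some s1 → m2 x = some s2 → s2.1 ≤ s1.1 ∧ s1.2 ≤ s2.2

/-- The left-to-right domination relation: same start, `m2` no shorter. -/
def ltrRel {V : Type} (m1 m2 : Mapping V) : Prop :=
  sameDom m1 m2 ∧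
    ∀ x s1 s2, m1 x = some s1 → m2 x = some s2 →
      s1.1 = s2.1 ∧ s1.2 - s1.1 ≤ s2.2 - s2.1

/-- The span length domination relation: `m2`'s spans are no shorter. -/
def spanLenRel {V : Type} (m1 m2 : Mapping V) : Prop :=
  sameDom m1 m2 ∧
    ∀ x s1 s2, m1 x = some s1 → m2 x = some s2 → s1.2 - s1.1 ≤ s2.2 - s2.1


/-! A valid ref-word determines its document and its mapping exactly through its blocks: the
letters, and between consecutive letters the set of markers read there. Hence `P1 − P2` is
defined by the product of a VA for `P1` with a deterministic automaton rejecting every ref-word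
that is block-equivalent to an accepting run of a VA `A₂` for `P2`. That automaton runs the
subset construction of `A₂` block by block: it buffers the markers of the current block and, at
the next letter, lets `A₂` read them in every order. Its state space is finite because a finite
sequential VA reads only finitely many markers. -/

def Label.marker {α V : Type} : V × Bool → Label α V
  | (x, true) => .vopen x
  | (x, false) => .vclose x

section RefWords

variable {α V : Type}

theorem Label.marker_inj {m m' : V × Bool} :
    (Label.marker m : Label α V) = .marker m' ↔ m = m' := by
  obtain ⟨x, _ | _⟩ := m <;> obtain ⟨y, _ | _⟩ := m' <;> simp [Label.marker]

theorem Label.letter_ne_marker (a : α) (m : V × Bool) : .letter a ≠ Label.marker m := by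
  obtain ⟨x, _ | _⟩ := m <;> simp [Label.marker]

@[elab_as_elim]
theorem refWord_induction {motive : List (Label α V) → Prop} (nil : motive [])
    (letter : ∀ a w, motive w → motive (.letter a :: w))
    (marker : ∀ m w, motive w → motive (.marker m :: w)) : ∀ w, motive w
  | [] => nil
  | .letter a :: w => letter a w (refWord_induction nil letter marker w)
  | .vopen x :: w => marker (x, true) w (refWord_induction nil letter marker w)
  | .vclose x :: w => marker (x, false) w (refWord_induction nil letter marker w)

@[simp] theorem letters_nil : letters ([] : List (Label α V)) = [] := rfl

@[simp] theorem letters_cons_letter (a : α) (w : List (Label α V)) :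
    letters (.letter a :: w) = a :: letters w := rfl

@[simp] theorem letters_cons_marker (m : V × Bool) (w : List (Label α V)) :
    letters (.marker m :: w) = letters w := by
  obtain ⟨x, _ | _⟩ := m <;> rfl

variable [DecidableEq α] [DecidableEq V] {w : List (Label α V)}

theorem ValidRef.marker_mem_iff (hw : ValidRef w) (x : V) (b b' : Bool) :
    .marker (x, b) ∈ w ↔ .marker (x, b') ∈ w := by
  rcases hw x with ⟨h₁, h₂⟩ | ⟨h₁, h₂, -⟩
  · cases b <;> cases b' <;> simp_all [Label.marker]
  · have := List.count_pos_iff.1 (h₁ ▸ one_pos)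
    have := List.count_pos_iff.1 (h₂ ▸ one_pos)
    cases b <;> cases b' <;> simp_all [Label.marker]

theorem ValidRef.count_marker_le_one (hw : ValidRef w) (m : V × Bool) :
    w.count (.marker m) ≤ 1 := by
  obtain ⟨x, b⟩ := m
  rcases hw x with ⟨h₁, h₂⟩ | ⟨h₁, h₂, -⟩ <;> cases b <;>
    simp_all [Label.marker, List.count_eq_zero_of_not_mem]

theorem ValidRef.eq_of_append_marker {u v : List (Label α V)} {m m' : V × Bool}
    (h : ValidRef (u ++ .marker m :: v)) (h' : ValidRef (u ++ .marker m' :: v)) : m = m' := by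
  obtain ⟨x, b⟩ := m
  by_contra hne
  have hpartner : Label.marker (x, !b) ∈ u ++ v := by
    have := (h.marker_mem_iff x b !b).1 (by simp)
    simpa [Label.marker_inj] using this
  have hself : Label.marker (x, b) ∈ u ++ v := by
    have := (h'.marker_mem_iff x (!b) b).1
      (((List.sublist_cons_self _ v).append_left u).subset hpartner)
    simpa [Label.marker_inj, hne] using this
  have := h.count_marker_le_one (x, b)
  have := List.count_pos_iff.2 hself
  simp only [List.count_append, List.count_cons_self] at *
  omega

end RefWords

section Blocks

variable {α V : Type}

/-- Two ref-words have the same blocks iff they differ only in the order of the markers between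
consecutive letters. -/
def blocks : List (Label α V) → Multiset (Label α V) × List (α × Multiset (Label α V))
  | [] => (0, [])
  | .letter a :: w => (0, (a, (blocks w).1) :: (blocks w).2)
  | l :: w => (l ::ₘ (blocks w).1, (blocks w).2)

@[simp] theorem blocks_nil : blocks ([] : List (Label α V)) = (0, []) := rfl

@[simp] theorem blocks_cons_letter (a : α) (w : List (Label α V)) :
    blocks (.letter a :: w) = (0, (a, (blocks w).1) :: (blocks w).2) := rfl

@[simp] theorem blocks_cons_marker (m : V × Bool) (w : List (Label α V)) :
    blocks (.marker m :: w) = (.marker m ::ₘ (blocks w).1, (blocks w).2) := by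
  obtain ⟨x, _ | _⟩ := m <;> rfl

theorem letters_eq_map_blocks (w : List (Label α V)) : letters w = (blocks w).2.map Prod.fst := by
  induction w using refWord_induction <;> simp_all

theorem blocks_fst_le (w : List (Label α V)) : (blocks w).1 ≤ (w : Multiset (Label α V)) := by
  induction w using refWord_induction with
  | nil => rfl
  | letter a w _ => exact Multiset.zero_le _
  | marker m w ih => simpa using Multiset.cons_le_cons _ ih

theorem blocks_append_of_blocks_eq {p : List (Label α V)} {m : Multiset (Label α V)}
    (hp : blocks p = (m, [])) (w : List (Label α V)) :
    blocks (p ++ w) = (m + (blocks w).1, (blocks w).2) := by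
  induction p using refWord_induction generalizing m with
  | nil => simp only [blocks_nil, Prod.mk.injEq] at hp; simp [← hp.1]
  | letter a p _ => simp at hp
  | marker m' p ih =>
    simp only [blocks_cons_marker, Prod.mk.injEq] at hp
    simp [ih (Prod.ext rfl hp.2), ← hp.1]

theorem blocks_eq_cons_iff {v : List (Label α V)} {m m' : Multiset (Label α V)} {a : α}
    {bs : List (α × Multiset (Label α V))} :
    blocks v = (m, (a, m') :: bs) ↔
      ∃ p v', v = p ++ .letter a :: v' ∧ blocks p = (m, []) ∧ blocks v' = (m', bs) := by
  constructor
  · intro hv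
    induction v using refWord_induction generalizing m with
    | nil => simp at hv
    | letter b v _ =>
      simp only [blocks_cons_letter, Prod.mk.injEq, List.cons.injEq] at hv
      obtain ⟨rfl, ⟨rfl, rfl⟩, rfl⟩ := hv
      exact ⟨[], v, rfl, rfl, rfl⟩
    | marker m'' v ih =>
      simp only [blocks_cons_marker, Prod.mk.injEq] at hv
      obtain ⟨p, v', rfl, hp, hv'⟩ := ih (Prod.ext rfl hv.2)
      exact ⟨.marker m'' :: p, v', rfl, by simp [hp, ← hv.1], hv'⟩
  · rintro ⟨p, v', rfl, hp, hv'⟩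
    simp [blocks_append_of_blocks_eq hp, hv']

/-- Block `0` precedes the first letter; block `i + 1` follows letter number `i`. -/
def blockAt (w : List (Label α V)) : ℕ → Multiset (Label α V)
  | 0 => (blocks w).1
  | i + 1 => ((blocks w).2[i]?.map Prod.snd).getD 0

@[simp] theorem blockAt_nil (i : ℕ) : blockAt ([] : List (Label α V)) i = 0 := by
  cases i <;> rfl

@[simp] theorem blockAt_cons_letter_zero (a : α) (w : List (Label α V)) :
    blockAt (.letter a :: w) 0 = 0 := rfl

@[simp] theorem blockAt_cons_letter_succ (a : α) (w : List (Label α V)) (i : ℕ) :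
    blockAt (.letter a :: w) (i + 1) = blockAt w i := by
  cases i <;> rfl

@[simp] theorem blockAt_cons_marker_zero (m : V × Bool) (w : List (Label α V)) :
    blockAt (.marker m :: w) 0 = .marker m ::ₘ blockAt w 0 := by
  simp [blockAt]

@[simp] theorem blockAt_cons_marker_succ (m : V × Bool) (w : List (Label α V)) (i : ℕ) :
    blockAt (.marker m :: w) (i + 1) = blockAt w (i + 1) := by
  simp [blockAt]

theorem getElem?_blocks_snd (w : List (Label α V)) (n : ℕ) :
    (blocks w).2[n]? = (letters w)[n]?.map (·, blockAt w (n + 1)) := by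
  rw [letters_eq_map_blocks, List.getElem?_map]
  rcases h : (blocks w).2[n]? with _ | ⟨b, m⟩ <;> simp [blockAt, h]

theorem blocks_eq_blocks_iff {u v : List (Label α V)} :
    blocks u = blocks v ↔ letters u = letters v ∧ ∀ i, blockAt u i = blockAt v i := by
  constructor
  · intro h
    refine ⟨by rw [letters_eq_map_blocks, h, ← letters_eq_map_blocks], fun i => ?_⟩
    cases i <;> simp [blockAt, h]
  · rintro ⟨hl, hb⟩
    refine Prod.ext (hb 0) (List.ext_getElem? fun n => ?_)
    rw [getElem?_blocks_snd, getElem?_blocks_snd, hl, hb]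

theorem letter_not_mem_blockAt (a : α) (w : List (Label α V)) (i : ℕ) :
    .letter a ∉ blockAt w i := by
  induction w using refWord_induction generalizing i with
  | nil => simp
  | letter b w ih => cases i <;> simp [ih]
  | marker m w ih => cases i <;> simp [ih, Label.letter_ne_marker]

end Blocks

section MarkerPositions

variable {α V : Type} [DecidableEq α] [DecidableEq V]

def markerPos (w : List (Label α V)) (l : Label α V) : Option ℕ :=
  if l ∈ w then some (letters (w.take (w.idxOf l))).length else none

@[simp] theorem markerPos_nil (l : Label α V) : markerPos [] l = none := rfl

@[simp] theorem markerPos_cons_self (l : Label α V) (w : List (Label α V)) :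
    markerPos (l :: w) l = some 0 := by
  simp [markerPos]

theorem markerPos_cons_letter {l : Label α V} {a : α} (h : l ≠ .letter a)
    (w : List (Label α V)) :
    markerPos (.letter a :: w) l = (markerPos w l).map (· + 1) := by
  by_cases hl : l ∈ w <;> simp [markerPos, hl, h, List.idxOf_cons_ne _ (Ne.symm h)]

theorem markerPos_cons_marker {l : Label α V} {m : V × Bool} (h : l ≠ .marker m)
    (w : List (Label α V)) : markerPos (.marker m :: w) l = markerPos w l := by
  by_cases hl : l ∈ w <;> simp [markerPos, hl, h, List.idxOf_cons_ne _ (Ne.symm h)]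

theorem count_blockAt {m : V × Bool} {w : List (Label α V)} (hw : w.count (.marker m) ≤ 1)
    (i : ℕ) :
    (blockAt w i).count (.marker m) = if markerPos w (.marker m) = some i then 1 else 0 := by
  induction w using refWord_induction generalizing i with
  | nil => simp
  | letter a w ih =>
    rw [List.count_cons_of_ne (Label.letter_ne_marker a m)] at hw
    rw [markerPos_cons_letter (Label.letter_ne_marker a m).symm]
    cases i <;> simp [ih hw]
  | marker m' w ih =>
    by_cases hm : m' = m
    · subst hm
      have h₀ : w.count (.marker m') = 0 := by simpa using hw
      have hnone : markerPos w (.marker m') = none := by simp [markerPos, List.count_eq_zero.1 h₀]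
      have := ih (by omega)
      cases i <;> simp [← Multiset.count_eq_zero, this, hnone]
    · have hne : (Label.marker m : Label α V) ≠ .marker m' := by
        simpa [Label.marker_inj] using Ne.symm hm
      rw [List.count_cons_of_ne hne.symm] at hw
      rw [markerPos_cons_marker hne]
      cases i <;> simp [ih hw, hne]

theorem blockAt_ext_iff {u v : List (Label α V)} (hu : ∀ m, u.count (.marker m) ≤ 1)
    (hv : ∀ m, v.count (.marker m) ≤ 1) :
    (∀ i, blockAt u i = blockAt v i) ↔
      ∀ m, markerPos u (.marker m) = markerPos v (.marker m) := by
  constructor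
  · intro h m
    refine Option.ext fun i => ?_
    have := congrArg (Multiset.count (Label.marker m)) (h i)
    rw [count_blockAt (hu m), count_blockAt (hv m)] at this
    split_ifs at this <;> simp_all
  · intro h i
    ext l
    rcases l with a | x | x
    · simp [Multiset.count_eq_zero.2 (letter_not_mem_blockAt a _ i)]
    · rw [show Label.vopen x = Label.marker (x, true) from rfl, count_blockAt (hu _),
        count_blockAt (hv _), h]
    · rw [show Label.vclose x = Label.marker (x, false) from rfl, count_blockAt (hu _),
        count_blockAt (hv _), h]

theorem refMapping_eq_iff {u v : List (Label α V)} (hu : ValidRef u) (hv : ValidRef v) :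
    refMapping u = refMapping v ↔ ∀ m, markerPos u (.marker m) = markerPos v (.marker m) := by
  simp only [funext_iff, Prod.forall, Bool.forall_bool]
  refine forall_congr' fun x => ?_
  have hu' := hu.marker_mem_iff x true false
  have hv' := hv.marker_mem_iff x true false
  simp only [Label.marker] at hu' hv'
  by_cases h₁ : Label.vopen x ∈ u <;> by_cases h₂ : Label.vopen x ∈ v <;>
    simp_all [refMapping, markerPos, Label.marker, and_comm]

theorem blocks_eq_blocks_iff_of_validRef {u v : List (Label α V)} (hu : ValidRef u)
    (hv : ValidRef v) :
    blocks u = blocks v ↔ letters u = letters v ∧ refMapping u = refMapping v := by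
  rw [blocks_eq_blocks_iff, blockAt_ext_iff hu.count_marker_le_one hv.count_marker_le_one,
    refMapping_eq_iff hu hv]

end MarkerPositions

namespace VA

variable {α V Q : Type} (A : VA α V Q)

theorem path_cons_iff {q q'' : Q} {l : Label α V} {w : List (Label α V)} :
    A.Path q (l :: w) q'' ↔ ∃ q', A.trans q l q' ∧ A.Path q' w q'' :=
  ⟨fun | .cons t p => ⟨_, t, p⟩, fun ⟨_, t, p⟩ => .cons t p⟩

theorem path_append_iff {q q'' : Q} {u v : List (Label α V)} :
    A.Path q (u ++ v) q'' ↔ ∃ q', A.Path q u q' ∧ A.Path q' v q'' := by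
  induction u generalizing q with
  | nil => exact ⟨fun h => ⟨q, .nil q, h⟩, fun ⟨_, .nil _, h⟩ => h⟩
  | cons l u ih =>
    simp only [List.cons_append, path_cons_iff, ih]
    exact ⟨fun ⟨q₁, t, q', p, p'⟩ => ⟨q', ⟨q₁, t, p⟩, p'⟩,
      fun ⟨q', ⟨q₁, t, p⟩, p'⟩ => ⟨q₁, t, q', p, p'⟩⟩

theorem Path.append {q q' q'' : Q} {u v : List (Label α V)} (hu : A.Path q u q')
    (hv : A.Path q' v q'') : A.Path q (u ++ v) q'' :=
  (A.path_append_iff).2 ⟨q', hu, hv⟩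

variable {A}

/-- Distinct markers cannot label the same transition of an accepting run. -/
theorem Sequential.finite_markers [DecidableEq α] [DecidableEq V] [Finite Q]
    (hA : A.Sequential) :
    {m : V × Bool | ∃ w, A.AcceptsRef w ∧ .marker m ∈ w}.Finite := by
  let T (p : Q × Q) : Set (V × Bool) := {m | ∃ u v, ∃ qf ∈ A.final,
    A.Path A.init u p.1 ∧ A.trans p.1 (.marker m) p.2 ∧ A.Path p.2 v qf}
  have hsub : {m : V × Bool | ∃ w, A.AcceptsRef w ∧ .marker m ∈ w} ⊆ ⋃ p, T p := by
    rintro m ⟨w, ⟨qf, hqf, hw⟩, hm⟩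
    obtain ⟨u, v, rfl⟩ := List.append_of_mem hm
    obtain ⟨q₁, hu, hv⟩ := A.path_append_iff.1 hw
    obtain ⟨q₂, t, hv⟩ := A.path_cons_iff.1 hv
    exact Set.mem_iUnion.2 ⟨(q₁, q₂), u, v, qf, hqf, hu, t, hv⟩
  have hT (p : Q × Q) : (T p).Subsingleton := by
    rintro m ⟨u, v, qf, hqf, hu, t, hv⟩ m' ⟨-, -, -, -, -, t', -⟩
    exact (hA _ ⟨qf, hqf, hu.append _ (.cons t hv)⟩).eq_of_append_marker
      (hA _ ⟨qf, hqf, hu.append _ (.cons t' hv)⟩)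
  exact (Set.finite_iUnion fun p => (hT p).finite).subset hsub

def ReadsMarkersIn (A : VA α V Q) (M : Finset (V × Bool)) : Prop :=
  ∀ w, A.AcceptsRef w → ∀ m, .marker m ∈ w → m ∈ M

def interDFA {σ : Type} (A : VA α V Q) (D : DFA (Label α V) σ) : VA α V (Q × σ) where
  init := (A.init, D.start)
  final := A.final ×ˢ D.accept
  trans p l p' := A.trans p.1 l p'.1 ∧ p'.2 = D.step p.2 l

variable {σ : Type} {D : DFA (Label α V) σ}

theorem path_interDFA_iff {p p' : Q × σ} {w : List (Label α V)} :
    (A.interDFA D).Path p w p' ↔ A.Path p.1 w p'.1 ∧ p'.2 = D.evalFrom p.2 w := by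
  induction w generalizing p with
  | nil =>
    obtain ⟨q, s⟩ := p
    obtain ⟨q', s'⟩ := p'
    constructor
    · rintro ⟨⟩
      exact ⟨.nil _, rfl⟩
    · rintro ⟨⟨⟩, rfl⟩
      exact .nil _
  | cons l w ih =>
    simp only [path_cons_iff, ih, DFA.evalFrom_cons]
    constructor
    · rintro ⟨q, ⟨t, hq⟩, p, hp⟩
      exact ⟨⟨q.1, t, p⟩, hq ▸ hp⟩
    · rintro ⟨⟨q, t, p⟩, hp⟩
      exact ⟨(q, D.step _ l), ⟨t, rfl⟩, p, hp⟩

theorem acceptsRef_interDFA_iff {w : List (Label α V)} :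
    (A.interDFA D).AcceptsRef w ↔ A.AcceptsRef w ∧ w ∈ D.accepts := by
  constructor
  · rintro ⟨qf, ⟨hq, hs⟩, hp⟩
    obtain ⟨hp, hqf⟩ := path_interDFA_iff.1 hp
    rw [hqf] at hs
    exact ⟨⟨qf.1, hq, hp⟩, hs⟩
  · rintro ⟨⟨qf, hq, hp⟩, hs⟩
    exact ⟨(qf, D.eval w), ⟨hq, hs⟩, path_interDFA_iff.2 ⟨hp, rfl⟩⟩

theorem Sequential.interDFA [DecidableEq α] [DecidableEq V] (hA : A.Sequential)
    (D : DFA (Label α V) σ) : (A.interDFA D).Sequential :=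
  fun w hw => hA w (acceptsRef_interDFA_iff.1 hw).1

end VA

section BlockDFA

variable {α V Q : Type} {M : Finset (V × Bool)}

def bufferMarkers (B : Finset M) : Multiset (Label α V) :=
  B.val.map fun m => .marker m.1

@[simp] theorem bufferMarkers_empty :
    bufferMarkers (∅ : Finset M) = (0 : Multiset (Label α V)) :=
  rfl

variable [DecidableEq V]

theorem bufferMarkers_insert {m : M} {B : Finset M} (h : m ∉ B) :
    bufferMarkers (insert m B) = (.marker m.1 ::ₘ bufferMarkers B : Multiset (Label α V)) := by
  simp [bufferMarkers, Finset.insert_val_of_notMem h]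

/-- Failing is final: no accepting run of the simulated VA reads a marker outside `M` or the same
marker twice. -/
def pushMarker (S : Set Q) (B : Finset M) (m : V × Bool) : Option (Set Q × Finset M) :=
  if h : ∃ h : m ∈ M, ⟨m, h⟩ ∉ B then some (S, insert ⟨m, h.1⟩ B) else none

namespace VA

/-- A deterministic automaton that runs `A` up to the order of markers inside each block: in a
state `some (S, B)`, `S` is the set of states that `A` reaches by some reordering of the input up
to its last letter, and `B` is the set of markers read since that letter. -/
def blockDFA (A : VA α V Q) (M : Finset (V × Bool)) :
    DFA (Label α V) (Option (Set Q × Finset M)) where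
  step
    | none, _ => none
    | some (S, B), .letter a => some ({q' | ∃ q ∈ S, ∃ p,
        blocks p = (bufferMarkers B, []) ∧ A.Path q (p ++ [.letter a]) q'}, ∅)
    | some (S, B), .vopen x => pushMarker S B (x, true)
    | some (S, B), .vclose x => pushMarker S B (x, false)
  start := some ({A.init}, ∅)
  accept := {s | ∃ S B, s = some (S, B) ∧
    ∃ q ∈ S, ∃ qf ∈ A.final, ∃ p, A.Path q p qf ∧ blocks p = (bufferMarkers B, [])}

variable {A : VA α V Q}

theorem blockDFA_step_letter (S : Set Q) (B : Finset M) (a : α) :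
    (A.blockDFA M).step (some (S, B)) (.letter a) = some ({q' | ∃ q ∈ S, ∃ p,
      blocks p = (bufferMarkers B, []) ∧ A.Path q (p ++ [.letter a]) q'}, ∅) :=
  rfl

theorem blockDFA_step_marker (S : Set Q) (B : Finset M) (m : V × Bool) :
    (A.blockDFA M).step (some (S, B)) (.marker m) = pushMarker S B m := by
  obtain ⟨x, _ | _⟩ := m <;> rfl

theorem evalFrom_none_blockDFA (w : List (Label α V)) :
    (A.blockDFA M).evalFrom none w = none := by
  induction w with
  | nil => rfl
  | cons l w ih => exact ih

@[simp] theorem some_mem_accept_blockDFA_iff (S : Set Q) (B : Finset M) :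
    some (S, B) ∈ (A.blockDFA M).accept ↔
      ∃ q ∈ S, ∃ qf ∈ A.final, ∃ p,
        A.Path q p qf ∧ blocks p = (bufferMarkers B, []) := by
  simp [blockDFA]

@[simp] theorem none_notMem_accept_blockDFA : none ∉ (A.blockDFA M).accept := by
  simp [blockDFA]

variable [DecidableEq α]

theorem exists_mem_notMem_of_path (hA : A.Sequential)
    (hM : A.ReadsMarkersIn M) {q qf : Q}
    (hq : ∃ u, A.Path A.init u q) (hqf : qf ∈ A.final) {v : List (Label α V)}
    (hv : A.Path q v qf) {m : V × Bool} {B : Finset M}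
    (hle : .marker m ::ₘ bufferMarkers B ≤ (v : Multiset (Label α V))) :
    ∃ h : m ∈ M, (⟨m, h⟩ : M) ∉ B := by
  obtain ⟨u, hu⟩ := hq
  have hacc : A.AcceptsRef (u ++ v) := ⟨qf, hqf, hu.append _ hv⟩
  have hmv : Label.marker m ∈ v := Multiset.mem_of_le hle (Multiset.mem_cons_self _ _)
  refine ⟨hM _ hacc m (List.mem_append_right u hmv), fun hB => ?_⟩
  have hcount := Multiset.count_le_of_le (Label.marker m) hle
  have hpos : 0 < (bufferMarkers B).count (Label.marker m : Label α V) :=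
    Multiset.count_pos.2 (Multiset.mem_map_of_mem _ hB)
  have := (hA _ hacc).count_marker_le_one m
  simp only [Multiset.count_cons_self, Multiset.coe_count, List.count_append] at hcount this
  omega

theorem evalFrom_blockDFA_mem_accept_iff (hA : A.Sequential)
    (hM : A.ReadsMarkersIn M) (w : List (Label α V))
    {S : Set Q} (hS : ∀ q ∈ S, ∃ u, A.Path A.init u q) (B : Finset M) :
    (A.blockDFA M).evalFrom (some (S, B)) w ∈ (A.blockDFA M).accept ↔
      ∃ q ∈ S, ∃ qf ∈ A.final, ∃ v,
        A.Path q v qf ∧ blocks v = (bufferMarkers B + (blocks w).1, (blocks w).2) := by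
  induction w using refWord_induction generalizing S B with
  | nil => simp [DFA.evalFrom_nil]
  | letter a w ih =>
    rw [DFA.evalFrom_cons, blockDFA_step_letter, ih]
    · simp only [bufferMarkers_empty, zero_add, blocks_cons_letter, add_zero, blocks_eq_cons_iff]
      constructor
      · rintro ⟨q', ⟨q, hq, p, hp, hpq⟩, qf, hqf, v', hv', hb⟩
        exact ⟨q, hq, qf, hqf, _, by simpa using hpq.append _ hv', p, v', rfl, hp, hb⟩
      · rintro ⟨q, hq, qf, hqf, _, hv, p, v', rfl, hp, hb⟩
        rw [← List.singleton_append, ← List.append_assoc] at hv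
        obtain ⟨q', hpq, hv'⟩ := A.path_append_iff.1 hv
        exact ⟨q', ⟨q, hq, p, hp, hpq⟩, qf, hqf, v', hv', hb⟩
    · rintro q' ⟨q, hq, p, -, hpq⟩
      obtain ⟨u, hu⟩ := hS q hq
      exact ⟨_, hu.append _ hpq⟩
  | marker m w ih =>
    rw [DFA.evalFrom_cons, blockDFA_step_marker, pushMarker, blocks_cons_marker,
      Multiset.add_cons, ← Multiset.cons_add]
    split_ifs with h
    · rw [ih hS, bufferMarkers_insert h.2]
    · simp only [evalFrom_none_blockDFA, none_notMem_accept_blockDFA, false_iff, not_exists,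
        not_and]
      intro q hq qf hqf v hv hb
      refine h (exists_mem_notMem_of_path hA hM (hS q hq) hqf hv ?_)
      calc _ ≤ (blocks v).1 := by rw [hb]; exact Multiset.le_add_right _ _
        _ ≤ _ := blocks_fst_le v

theorem mem_accepts_blockDFA_iff (hA : A.Sequential)
    (hM : A.ReadsMarkersIn M) (w : List (Label α V)) :
    w ∈ (A.blockDFA M).accepts ↔ ∃ v, A.AcceptsRef v ∧ blocks v = blocks w := by
  rw [DFA.mem_accepts, DFA.eval, show (A.blockDFA M).start = some ({A.init}, ∅) from rfl,
    evalFrom_blockDFA_mem_accept_iff hA hM w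
    (by rintro q rfl; exact ⟨[], .nil _⟩)]
  simp only [Set.mem_singleton_iff, exists_eq_left, bufferMarkers_empty, zero_add, Prod.mk.eta]
  exact ⟨fun ⟨qf, hqf, v, hv, hb⟩ => ⟨v, ⟨qf, hqf, hv⟩, hb⟩,
    fun ⟨v, ⟨qf, hqf, hv⟩, hb⟩ => ⟨qf, hqf, v, hv, hb⟩⟩

end VA

end BlockDFA

namespace VA

variable {α V Q₁ Q₂ : Type} [DecidableEq α] [DecidableEq V]
  {A₁ : VA α V Q₁} {A₂ : VA α V Q₂} {M : Finset (V × Bool)}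

theorem spanner_interDFA_compl_blockDFA (h₁ : A₁.Sequential) (h₂ : A₂.Sequential)
    (hM : A₂.ReadsMarkersIn M) (d : List α) :
    (A₁.interDFA (A₂.blockDFA M)ᶜ).spanner d = A₁.spanner d \ A₂.spanner d := by
  ext m
  simp only [spanner, acceptsRef_interDFA_iff, DFA.accepts_compl, Set.mem_sdiff,
    Set.mem_ofPred_eq]
  constructor
  · rintro ⟨w, ⟨hw, hw₂⟩, rfl, rfl⟩
    refine ⟨⟨w, hw, rfl, rfl⟩, fun ⟨v, hv, hl, hm⟩ => hw₂ ?_⟩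
    exact (mem_accepts_blockDFA_iff h₂ hM w).2
      ⟨v, hv, (blocks_eq_blocks_iff_of_validRef (h₂ v hv) (h₁ w hw)).2 ⟨hl, hm⟩⟩
  · rintro ⟨⟨w, hw, rfl, rfl⟩, hnot⟩
    refine ⟨w, ⟨hw, fun hw₂ => ?_⟩, rfl, rfl⟩
    obtain ⟨v, hv, hb⟩ := (mem_accepts_blockDFA_iff h₂ hM w).1 hw₂
    exact hnot ⟨v, hv, (blocks_eq_blocks_iff_of_validRef (h₂ v hv) (h₁ w hw)).1 hb⟩

end VA

theorem regular_closed_under_difference_general {α V : Type} [DecidableEq α]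
    [DecidableEq V] (P1 P2 : Spanner α V) (h1 : IsRegular P1) (h2 : IsRegular P2) :
    IsRegular (fun d => P1 d \ P2 d) := by
  obtain ⟨Q₁, _, A₁, hA₁, rfl⟩ := h1
  obtain ⟨Q₂, _, A₂, hA₂, rfl⟩ := h2
  let M := hA₂.finite_markers.toFinset
  have hM : A₂.ReadsMarkersIn M :=
    fun w hw m hm => hA₂.finite_markers.mem_toFinset.2 ⟨w, hw, hm⟩
  exact ⟨_, Fintype.ofFinite _, A₁.interDFA (A₂.blockDFA M)ᶜ, hA₁.interDFA _,
    funext (VA.spanner_interDFA_compl_blockDFA hA₁ hA₂ hM)⟩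

/-- Regular spanners are closed under set difference. -/
theorem regular_closed_under_difference {α V : Type} [Fintype α] [DecidableEq α]
    [DecidableEq V] (P1 P2 : Spanner α V) (h1 : IsRegular P1) (h2 : IsRegular P2) :
    IsRegular (fun d => P1 d \ P2 d) :=
  regular_closed_under_difference_general P1 P2 h1 h2

end DocSpanners
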